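/- Let ω < 0, 0 < α ≤ 1 and 0 < αγ ≤ β ≤ 1. For every θ ∈ (0, απ/2), setting μ(θ) = (|ω| sin θ / sin(απ/2 − θ))^(1/α), one has F(i·μ(θ)) = Λ(θ); i.e., the purely imaginary number i·μ(θ) is a root of the characteristic equation F(s) = λ for λ = Λ(θ). -/

import Mathlib

/-! On the imaginary axis `iμ = μ e^{iπ/2}`, so `(iμ)^α = μ^α e^{iA}` with `A = απ/2`. The choice of
`μ` together with the identity `sin θ · e^{iA} + sin (A - θ) = sin A · e^{iθ}` turns
`(iμ)^α - ω` into `ρ e^{iθ}`. Since both `π/2` and `θ` are principal arguments, the principal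
powers in `F(iμ)` split into moduli and arguments: the modulus is `μ^(β-αγ) ρ^γ` and the argument
is `(β - αγ)π/2 + γθ`. -/

open Real Complex Filter Set Topology

/-- The curve parametrization Λ(θ) bounding the stability region. -/
noncomputable def Lam (α β γ ω : ℝ) (θ : ℝ) : ℂ :=
  ((|ω| ^ (β / α) * Real.sin θ ^ (β / α - γ) * Real.sin (α * π / 2) ^ γ *
      Real.sin (α * π / 2 - θ) ^ (-(β / α)) : ℝ) : ℂ) *
    Complex.exp (Complex.I * ((γ * θ + (β - α * γ) * π / 2 : ℝ) : ℂ))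

/-- The characteristic function F(s) = s^(β-αγ) (s^α - ω)^γ (principal branches). -/
noncomputable def Fc (α β γ ω : ℝ) (s : ℂ) : ℂ :=
  s ^ ((β - α * γ : ℝ) : ℂ) * (s ^ ((α : ℝ) : ℂ) - (ω : ℂ)) ^ ((γ : ℝ) : ℂ)

/-- μ(θ) = (|ω| sin θ / sin(απ/2 - θ))^(1/α). -/
noncomputable def muP (α ω : ℝ) (θ : ℝ) : ℝ :=
  (|ω| * Real.sin θ / Real.sin (α * π / 2 - θ)) ^ (1 / α)

/-- ρ(θ) = |ω| sin(απ/2) / sin(απ/2 - θ). -/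
noncomputable def rhoP (α ω : ℝ) (θ : ℝ) : ℝ :=
  |ω| * Real.sin (α * π / 2) / Real.sin (α * π / 2 - θ)

lemma ofReal_mul_exp_mul_I_cpow {r θ : ℝ} (hr : 0 < r) (hθ : θ ∈ Set.Ioc (-π) π) (c : ℂ) :
    ((r : ℂ) * exp (θ * I)) ^ c = (r : ℂ) ^ c * exp (c * θ * I) := by
  have hr' : (r : ℂ) ≠ 0 := ofReal_ne_zero.mpr hr.ne'
  have hlog : log (exp (θ * I)) = θ * I := log_exp (by simpa using hθ.1) (by simpa using hθ.2)
  rw [cpow_def_of_ne_zero (mul_ne_zero hr' (exp_ne_zero _)), log_ofReal_mul hr (exp_ne_zero _),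
    hlog, cpow_def_of_ne_zero hr', ← ofReal_log hr.le, add_mul, Complex.exp_add]
  ring_nf

lemma I_mul_ofReal_cpow {μ : ℝ} (hμ : 0 < μ) (c : ℂ) :
    (I * μ) ^ c = (μ : ℂ) ^ c * exp (c * ↑(π / 2) * I) := by
  have hπ := Real.pi_pos
  rw [← ofReal_mul_exp_mul_I_cpow hμ ⟨by linarith, by linarith⟩, ofReal_div, ofReal_ofNat,
    exp_pi_div_two_mul_I, mul_comm]

lemma sin_mul_exp_mul_I_add_sin_sub (A θ : ℝ) :
    (Real.sin θ : ℂ) * exp (A * I) + (Real.sin (A - θ) : ℂ) = Real.sin A * exp (θ * I) := by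
  simp only [exp_mul_I, ofReal_sin, ofReal_sub, Complex.sin_sub]
  ring

lemma muP_rpow {α ω θ : ℝ} (hα : α ≠ 0) (hx : 0 ≤ |ω| * Real.sin θ / Real.sin (α * π / 2 - θ)) :
    muP α ω θ ^ α = |ω| * Real.sin θ / Real.sin (α * π / 2 - θ) := by
  rw [muP, ← Real.rpow_mul hx, one_div_mul_cancel hα, Real.rpow_one]

lemma I_mul_muP_cpow_sub {α ω θ : ℝ} (hα : α ≠ 0) (hω : ω < 0)
    (hx : 0 < |ω| * Real.sin θ / Real.sin (α * π / 2 - θ)) :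
    (I * muP α ω θ) ^ (α : ℂ) - ω = rhoP α ω θ * exp (θ * I) := by
  have hD : (Real.sin (α * π / 2 - θ) : ℂ) ≠ 0 := by
    rintro h
    simp [ofReal_eq_zero.mp h] at hx
  have hμ : 0 < muP α ω θ := Real.rpow_pos_of_pos hx _
  have hω' : (ω : ℂ) = -↑|ω| := by rw [abs_of_neg hω, ofReal_neg, neg_neg]
  have hA : (α : ℂ) * ↑(π / 2) = ↑(α * π / 2) := by push_cast; ring
  have key := sin_mul_exp_mul_I_add_sin_sub (α * π / 2) θ
  rw [I_mul_ofReal_cpow hμ, ← ofReal_cpow hμ.le, muP_rpow hα hx.le, rhoP, hω', hA]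
  generalize exp (↑(α * π / 2) * I) = E at key ⊢
  generalize exp (↑θ * I) = E' at key ⊢
  simp only [ofReal_div, ofReal_mul]
  generalize (Real.sin (α * π / 2 - θ) : ℂ) = D at hD key ⊢
  field_simp
  linear_combination ((|ω| : ℝ) : ℂ) * key

lemma muP_rpow_mul_rhoP_rpow {α ω θ : ℝ} (β γ : ℝ) (hα : α ≠ 0) (hω : ω ≠ 0)
    (hsθ : 0 < Real.sin θ) (hsA : 0 < Real.sin (α * π / 2))
    (hsD : 0 < Real.sin (α * π / 2 - θ)) :
    muP α ω θ ^ (β - α * γ) * rhoP α ω θ ^ γ =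
      |ω| ^ (β / α) * Real.sin θ ^ (β / α - γ) * Real.sin (α * π / 2) ^ γ *
        Real.sin (α * π / 2 - θ) ^ (-(β / α)) := by
  have hw : 0 < |ω| := abs_pos.mpr hω
  have hμ : muP α ω θ ^ (β - α * γ) =
      (|ω| * Real.sin θ / Real.sin (α * π / 2 - θ)) ^ (β / α - γ) := by
    rw [muP, ← Real.rpow_mul (by positivity)]
    congr 1
    field_simp
  obtain ⟨p, hp⟩ : ∃ p, β / α - γ = p := ⟨_, rfl⟩
  rw [hμ, hp, show β / α = p + γ by linarith, rhoP, Real.div_rpow (by positivity) hsD.le,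
    Real.div_rpow (by positivity) hsD.le, Real.mul_rpow hw.le hsθ.le, Real.mul_rpow hw.le hsA.le,
    Real.rpow_neg hsD.le, Real.rpow_add hw, Real.rpow_add hsD]
  field_simp

theorem F_at_imaginary_root_general (α β γ ω : ℝ) (hω : ω < 0) (hα0 : 0 < α) (hα1 : α ≤ 1) :
    ∀ θ ∈ Set.Ioo 0 (α * π / 2),
      Fc α β γ ω (Complex.I * (muP α ω θ : ℂ)) = Lam α β γ ω θ := by
  rintro θ ⟨hθ0, hθA⟩
  have hπ := Real.pi_pos
  have hA : α * π / 2 ≤ π / 2 := by nlinarith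
  have hsθ : 0 < Real.sin θ := sin_pos_of_pos_of_lt_pi hθ0 (by linarith)
  have hsA : 0 < Real.sin (α * π / 2) := sin_pos_of_pos_of_lt_pi (hθ0.trans hθA) (by linarith)
  have hsD : 0 < Real.sin (α * π / 2 - θ) :=
    sin_pos_of_pos_of_lt_pi (sub_pos.mpr hθA) (by linarith)
  have hw : 0 < |ω| := abs_pos.mpr hω.ne
  have hx : 0 < |ω| * Real.sin θ / Real.sin (α * π / 2 - θ) := by positivity
  have hμ : 0 < muP α ω θ := Real.rpow_pos_of_pos hx _
  have hρ : 0 < rhoP α ω θ := by unfold rhoP; positivity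
  rw [Fc, I_mul_muP_cpow_sub hα0.ne' hω hx, I_mul_ofReal_cpow hμ,
    ofReal_mul_exp_mul_I_cpow hρ ⟨by linarith, by linarith⟩, ← ofReal_cpow hμ.le,
    ← ofReal_cpow hρ.le, Lam, ← muP_rpow_mul_rhoP_rpow β γ hα0.ne' hω.ne hsθ hsA hsD,
    ofReal_mul, mul_mul_mul_comm, ← Complex.exp_add]
  congr 2
  push_cast
  ring

theorem F_at_imaginary_root (α β γ ω : ℝ) (hω : ω < 0) (hα0 : 0 < α) (hα1 : α ≤ 1)
    (hαγ : 0 < α * γ) (hβ0 : α * γ ≤ β) (hβ1 : β ≤ 1) :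
    ∀ θ ∈ Set.Ioo 0 (α * π / 2),
      Fc α β γ ω (Complex.I * (muP α ω θ : ℂ)) = Lam α β γ ω θ :=
  F_at_imaginary_root_general α β γ ω hω hα0 hα1
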